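/- arXiv:2310.18869 — 6 statements merged into one kernel-verified Lean document; each statement's English description precedes it below -/
import Mathlib

section
/- Let p be a prime, r ≥ 1 an integer, and i an integer with 1 ≤ i ≤ p^r − 1. Then, as rational numbers, Σ_{j=1, j≠i}^{p^r−1} ν_p(j − i) = −ν_p(i) + (p^r − p·r + r − 1)/(p − 1). -/
theorem digsum (p : ℕ) (hp : 2 ≤ p) : ∀ r : ℕ, (p.digits (p ^ r - 1)).sum = r * (p - 1) := by
  intro r
  induction r with
  | zero => simp
  | succ n ih =>
    have h1 : 1 ≤ p ^ n := Nat.one_le_pow _ _ (by omega)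
    have hps : p ^ (n+1) = p ^ n * p := pow_succ p n
    have hle : p ≤ p ^ (n+1) := by
      calc p = 1 * p := (one_mul p).symm
      _ ≤ p ^ n * p := Nat.mul_le_mul_right p h1
      _ = p ^ (n+1) := hps.symm
    have key : p ^ (n+1) - 1 = (p - 1) + (p ^ n - 1) * p := by
      rw [Nat.sub_mul, one_mul, ← hps]; omega
    have hpos : 0 < p ^ (n+1) - 1 := by omega
    rw [Nat.digits_def' (show 1 < p by omega) hpos, key]
    have hm : ((p - 1) + (p ^ n - 1) * p) % p = p - 1 := by
      rw [Nat.add_mul_mod_self_right, Nat.mod_eq_of_lt (by omega)]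
    have hd : ((p - 1) + (p ^ n - 1) * p) / p = p ^ n - 1 := by
      rw [Nat.add_mul_div_right _ _ (show 0 < p by omega), Nat.div_eq_of_lt (by omega)]
      omega
    rw [hm, hd, List.sum_cons, ih]
    ring

theorem sumval (p : ℕ) [Fact p.Prime] : ∀ n : ℕ,
    ∑ k ∈ Finset.Ioo 0 (n+1), padicValNat p k = padicValNat p (Nat.factorial n) := by
  intro n
  induction n with
  | zero =>
    simp
    intro x h1 h2; omega
  | succ m ih =>
    have : Finset.Ioo 0 (m+2) = insert (m+1) (Finset.Ioo 0 (m+1)) := by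
      ext x; simp [Finset.mem_Ioo, Finset.mem_insert]; omega
    rw [this, Finset.sum_insert (by simp), ih, Nat.factorial_succ,
      padicValNat.mul (by omega) (Nat.factorial_ne_zero m)]

theorem valsub (p : ℕ) [hp : Fact p.Prime] (r i : ℕ) (h0 : 0 < i) (h1 : i < p ^ r) :
    padicValNat p (p ^ r - i) = padicValNat p i := by
  have hp2 : 2 ≤ p := hp.out.two_le
  have hpm' := pow_succ_padicValNat_not_dvd (p := p) (show i ≠ 0 by omega)
  obtain ⟨m, hm⟩ : p ^ padicValNat p i ∣ i := pow_padicValNat_dvd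
  obtain ⟨v, hv⟩ : ∃ v, padicValNat p i = v := ⟨_, rfl⟩
  rw [hv] at hm hpm' ⊢
  have hm0 : 0 < m := by
    rcases Nat.eq_zero_or_pos m with h | h
    · simp [h] at hm; omega
    · exact h
  have hpm : ¬ p ∣ m := by
    rintro ⟨t, ht⟩
    exact hpm' ⟨t, by rw [hm, ht, pow_succ]; ring⟩
  have hvr : v < r := by
    have h2 : p ^ v ≤ i := Nat.le_of_dvd h0 ⟨m, hm⟩
    by_contra h
    have : p ^ r ≤ p ^ v := Nat.pow_le_pow_right (by omega) (by omega)
    omega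
  have hsplit : p ^ r = p ^ v * p ^ (r - v) := by
    rw [← pow_add]; congr 1; omega
  have hmlt : m < p ^ (r - v) := by
    by_contra h
    have : p ^ v * p ^ (r - v) ≤ p ^ v * m := Nat.mul_le_mul_left _ (by omega)
    omega
  have hkey : p ^ r - i = p ^ v * (p ^ (r - v) - m) := by
    rw [hsplit, hm, Nat.mul_sub]
  have hnd : ¬ p ∣ (p ^ (r - v) - m) := by
    intro hdvd
    have hdp : p ∣ p ^ (r - v) := dvd_pow_self p (by omega)
    have h3 : p ∣ p ^ (r - v) - (p ^ (r - v) - m) := Nat.dvd_sub hdp hdvd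
    rw [Nat.sub_sub_self (le_of_lt hmlt)] at h3
    exact hpm h3
  rw [hkey, padicValNat.mul (pow_ne_zero v (by omega)) (by omega),
    padicValNat.prime_pow, padicValNat.eq_zero_of_not_dvd hnd, add_zero]


/-- Let `p` be a prime, `r ≥ 1`, and `i` an integer with `1 ≤ i ≤ p^r − 1`.
Then, as rational numbers,
`∑_{j=1, j≠i}^{p^r−1} ν_p(j − i) = −ν_p(i) + (p^r − p·r + r − 1)/(p − 1)`. -/
theorem stmt3 (p r : ℕ) (hp : p.Prime) (hr : 1 ≤ r) (i : ℕ)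
    (hi : i ∈ Finset.Ioo 0 (p ^ r)) :
    ∑ j ∈ (Finset.Ioo 0 (p ^ r)).erase i, (padicValInt p ((j : ℤ) - (i : ℤ)) : ℚ) =
      -(padicValNat p i : ℚ) + ((p : ℚ) ^ r - (p : ℚ) * r + r - 1) / ((p : ℚ) - 1) := by
  haveI : Fact p.Prime := ⟨hp⟩
  have hp2 : 2 ≤ p := hp.two_le
  rw [Finset.mem_Ioo] at hi
  obtain ⟨hi0, hi1⟩ := hi
  -- step 1 : reindex
  have step1 : ∑ j ∈ (Finset.Ioo 0 (p ^ r)).erase i, (padicValInt p ((j : ℤ) - (i : ℤ)) : ℚ) =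
      ∑ k ∈ (Finset.Ioo 0 (p ^ r)).erase (p ^ r - i), (padicValNat p k : ℚ) := by
    apply Finset.sum_nbij' (fun j => if i < j then j - i else j + (p ^ r - i))
      (fun k => if k < p ^ r - i then k + i else k - (p ^ r - i))
    · intro a ha
      simp only [Finset.mem_erase, Finset.mem_Ioo] at ha ⊢
      split <;> omega
    · intro a ha
      simp only [Finset.mem_erase, Finset.mem_Ioo] at ha ⊢
      split <;> omega
    · intro a ha
      simp only [Finset.mem_erase, Finset.mem_Ioo] at ha
      split <;> split <;> omega
    · intro a ha
      simp only [Finset.mem_erase, Finset.mem_Ioo] at ha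
      split <;> split <;> omega
    · intro a ha
      simp only [Finset.mem_erase, Finset.mem_Ioo] at ha
      rcases lt_or_gt_of_ne ha.1 with h | h
      · -- a < i
        rw [if_neg (by omega)]
        have h1 : ((a : ℤ) - (i : ℤ)).natAbs = i - a := by omega
        have h2 : a + (p ^ r - i) = p ^ r - (i - a) := by omega
        rw [padicValInt, h1, h2, valsub p r (i - a) (by omega) (by omega)]
      · -- i < a
        rw [if_pos h]
        have h1 : ((a : ℤ) - (i : ℤ)).natAbs = a - i := by omega
        rw [padicValInt, h1]
  rw [step1, Finset.sum_erase_eq_sub (by simp only [Finset.mem_Ioo]; omega)]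
  have hsum : ∑ k ∈ Finset.Ioo 0 (p ^ r), (padicValNat p k : ℚ) =
      (padicValNat p (Nat.factorial (p ^ r - 1)) : ℚ) := by
    rw_mod_cast [← sumval p (p ^ r - 1)]
    congr 2
    have : 1 ≤ p ^ r := Nat.one_le_pow _ _ (by omega)
    omega
  rw [hsum, valsub p r i hi0 hi1]
  -- Legendre
  have hleg := sub_one_mul_padicValNat_factorial (p := p) (p ^ r - 1)
  rw [digsum p hp2 r] at hleg
  have hbound : 1 + r * (p - 1) ≤ p ^ r := by
    have h := one_add_mul_le_pow (a := (p : ℤ) - 1) (by push_cast; omega) r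
    have h3 : (1 + ((p : ℤ) - 1)) ^ r = (p : ℤ) ^ r := by ring_nf
    rw [h3] at h
    have : ((1 + r * (p - 1) : ℕ) : ℤ) ≤ ((p ^ r : ℕ) : ℤ) := by push_cast [Nat.cast_sub (by omega : 1 ≤ p)]; linarith
    exact_mod_cast this
  have hQ : ((p : ℚ) - 1) * (padicValNat p (Nat.factorial (p ^ r - 1)) : ℚ) =
      (p : ℚ) ^ r - 1 - r * ((p : ℚ) - 1) := by
    have := congrArg (fun n : ℕ => (n : ℚ)) hleg
    push_cast [Nat.cast_sub (by omega : 1 ≤ p), Nat.cast_sub (by omega : 1 ≤ p ^ r),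
      Nat.cast_sub (by omega : r * (p - 1) ≤ p ^ r - 1)] at this
    convert this using 2 <;> push_cast [Nat.cast_sub (by omega : 1 ≤ p)] <;> ring
  have hpne : (p : ℚ) - 1 ≠ 0 := by
    have : (2 : ℚ) ≤ (p : ℚ) := by exact_mod_cast hp2
    linarith
  have hN : (padicValNat p (Nat.factorial (p ^ r - 1)) : ℚ) =
      ((p : ℚ) ^ r - (p : ℚ) * r + r - 1) / ((p : ℚ) - 1) := by
    field_simp
    linarith [hQ]
  rw [hN]
  ring
end

section
/- Let p be a prime, r ≥ 1 an integer, and a' an integer with 1 ≤ a' ≤ p^r − 1. Then Σ_{a=1, a≠a'}^{p^r−1} ν_p(1/a − 1/a') = −(p^r − 2) · ν_p(a'). -/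
section aux

variable {p : ℕ} [hp : Fact p.Prime]

lemma aux_lt_r {r x : ℕ} (hx : 0 < x) (hxr : x < p ^ r) : padicValNat p x < r := by
  have h1 : p ^ padicValNat p x ≤ x := Nat.le_of_dvd hx pow_padicValNat_dvd
  have := lt_of_le_of_lt h1 hxr
  exact (Nat.pow_lt_pow_iff_right hp.out.one_lt).mp this

lemma aux_val_sub {r x : ℕ} (hx : 0 < x) (hxr : x < p ^ r) :
    padicValNat p (p ^ r - x) = padicValNat p x := by
  have hxq : (x : ℚ) ≠ 0 := by exact_mod_cast hx.ne'
  have hprq : ((p ^ r : ℕ) : ℚ) ≠ 0 := by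
    exact_mod_cast (lt_trans hx hxr).ne'
  have hsum : (-(x : ℚ)) + ((p ^ r : ℕ) : ℚ) = ((p ^ r - x : ℕ) : ℚ) := by
    push_cast [Nat.cast_sub hxr.le]; ring
  have hne : (-(x : ℚ)) + ((p ^ r : ℕ) : ℚ) ≠ 0 := by
    rw [hsum]
    exact_mod_cast (Nat.sub_pos_of_lt hxr).ne'
  have hval : padicValRat p (-(x : ℚ)) < padicValRat p ((p ^ r : ℕ) : ℚ) := by
    rw [padicValRat.neg, padicValRat.of_nat, padicValRat.of_nat, padicValNat.prime_pow]
    exact_mod_cast aux_lt_r hx hxr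
  have := padicValRat.add_eq_of_lt (p := p) hne (neg_ne_zero.mpr hxq) hprq hval
  rw [hsum, padicValRat.neg, padicValRat.of_nat, padicValRat.of_nat] at this
  exact_mod_cast this

end aux

/-- Let `p` be a prime, `r ≥ 1` an integer, and `a'` an integer with
`1 ≤ a' ≤ p^r − 1`. Then `∑_{a=1, a≠a'}^{p^r−1} ν_p(1/a − 1/a') = −(p^r − 2) · ν_p(a')`. -/
theorem stmt4 (p r : ℕ) (hp : p.Prime) (hr : 1 ≤ r) (a' : ℕ)
    (ha' : a' ∈ Finset.Ioo 0 (p ^ r)) :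
    ∑ a ∈ (Finset.Ioo 0 (p ^ r)).erase a',
        padicValRat p (1 / (a : ℚ) - 1 / (a' : ℚ)) =
      -((p : ℤ) ^ r - 2) * (padicValNat p a' : ℤ) := by
  haveI : Fact p.Prime := ⟨hp⟩
  obtain ⟨ha'0, ha'lt⟩ := Finset.mem_Ioo.mp ha'
  set S := (Finset.Ioo 0 (p ^ r)).erase a' with hS
  -- Step 1: rewrite each term
  have hterm : ∀ a ∈ S, padicValRat p (1 / (a : ℚ) - 1 / (a' : ℚ)) =
      (padicValInt p ((a' : ℤ) - a) : ℤ) - padicValNat p a - padicValNat p a' := by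
    intro a haS
    obtain ⟨hane, haIoo⟩ := Finset.mem_erase.mp haS
    obtain ⟨ha0, halt⟩ := Finset.mem_Ioo.mp haIoo
    have haq : (a : ℚ) ≠ 0 := by exact_mod_cast ha0.ne'
    have ha'q : (a' : ℚ) ≠ 0 := by exact_mod_cast ha'0.ne'
    have hdiff : ((a' : ℤ) - a : ℤ) ≠ 0 := by
      intro h
      have h2 : (a' : ℤ) = a := sub_eq_zero.mp h
      exact hane (by exact_mod_cast h2.symm)
    have heq : 1 / (a : ℚ) - 1 / (a' : ℚ) = (((a' : ℤ) - a : ℤ) : ℚ) / ((a : ℚ) * a') := by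
      push_cast
      field_simp
    rw [heq, padicValRat.div (p := p) (by exact_mod_cast hdiff) (mul_ne_zero haq ha'q),
      padicValRat.mul haq ha'q, padicValRat.of_int, padicValRat.of_nat, padicValRat.of_nat]
    ring
  rw [Finset.sum_congr rfl hterm]
  -- Step 2: the sum of padicValInt p (a' - a) equals sum of padicValNat p a
  have hmod : ∀ a ∈ S, (a' + p ^ r - a) % p ^ r =
      if a < a' then a' - a else a' + p ^ r - a := by
    intro a haS
    obtain ⟨hane, haIoo⟩ := Finset.mem_erase.mp haS
    obtain ⟨ha0, halt⟩ := Finset.mem_Ioo.mp haIoo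
    split
    · next h =>
      rw [show a' + p ^ r - a = (a' - a) + p ^ r by omega, Nat.add_mod_right,
        Nat.mod_eq_of_lt (by omega)]
    · next h =>
      exact Nat.mod_eq_of_lt (by omega)
  have hmem : ∀ a ∈ S, (a' + p ^ r - a) % p ^ r ∈ S := by
    intro a haS
    obtain ⟨hane, haIoo⟩ := Finset.mem_erase.mp haS
    obtain ⟨ha0, halt⟩ := Finset.mem_Ioo.mp haIoo
    rw [hmod a haS, Finset.mem_erase, Finset.mem_Ioo]
    split <;> refine ⟨by omega, by omega, by omega⟩
  have hinv : ∀ a ∈ S, (a' + p ^ r - (a' + p ^ r - a) % p ^ r) % p ^ r = a := by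
    intro a haS
    obtain ⟨hane, haIoo⟩ := Finset.mem_erase.mp haS
    obtain ⟨ha0, halt⟩ := Finset.mem_Ioo.mp haIoo
    rw [hmod a haS]
    split
    · next h =>
      rw [hmod _ (by rw [Finset.mem_erase, Finset.mem_Ioo]; exact ⟨by omega, by omega, by omega⟩)]
      split <;> omega
    · next h =>
      rw [hmod _ (by rw [Finset.mem_erase, Finset.mem_Ioo]; exact ⟨by omega, by omega, by omega⟩)]
      split <;> omega
  have hbij : ∑ a ∈ S, (padicValInt p ((a' : ℤ) - a) : ℤ) =
      ∑ a ∈ S, (padicValNat p a : ℤ) := by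
    apply Finset.sum_nbij' (i := fun a => (a' + p ^ r - a) % p ^ r)
      (j := fun a => (a' + p ^ r - a) % p ^ r) hmem hmem hinv hinv
    intro a haS
    obtain ⟨hane, haIoo⟩ := Finset.mem_erase.mp haS
    obtain ⟨ha0, halt⟩ := Finset.mem_Ioo.mp haIoo
    rw [hmod a haS]
    split
    · next h =>
      have h1 : ((a' : ℤ) - a) = ((a' - a : ℕ) : ℤ) := by omega
      rw [h1, padicValInt.of_nat]
    · next h =>
      have h1 : ((a' : ℤ) - a) = -((a - a' : ℕ) : ℤ) := by omega
      have h2 : a' + p ^ r - a = p ^ r - (a - a') := by omega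
      rw [h1, h2]
      have h3 : padicValInt p (-((a - a' : ℕ) : ℤ)) = padicValNat p (a - a') := by
        unfold padicValInt
        rw [Int.natAbs_neg, Int.natAbs_natCast]
      rw [h3, aux_val_sub (by omega) (by omega)]
  rw [Finset.sum_sub_distrib, Finset.sum_sub_distrib, hbij]
  simp only [sub_sub_cancel_left, Finset.sum_const, nsmul_eq_mul]
  have hcard : S.card = p ^ r - 2 := by
    rw [hS, Finset.card_erase_of_mem ha', Nat.card_Ioo]
    omega
  have hpr2 : 2 ≤ p ^ r := by
    calc 2 ≤ p := hp.two_le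
    _ ≤ p ^ r := Nat.le_self_pow (by omega) p
  rw [hcard]
  push_cast [Nat.cast_sub hpr2]
  ring
end

section
/- Let 𝕜 be a field, n ≥ 1, and let A be an invertible (n+1)×(n+1) matrix over 𝕜 with inverse M = A⁻¹ = (m_{ij}). Let s, t be indices with m_{t,s} ≠ 0, and let A_{ŝ,t̂} denote the n×n matrix obtained from A by deleting the s-th row and the t-th column. Then A_{ŝ,t̂} is invertible, and for all indices i ≠ t and j ≠ s, the entry of (A_{ŝ,t̂})⁻¹ in the row corresponding to i and the column corresponding to j equals m_{i,j} − m_{i,s}·m_{t,j}/m_{t,s}. -/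
/-!
With `M = A⁻¹`, the claimed inverse of the minor `A_{ŝ,t̂}` is the Schur complement of the pivot
`M t s` in `M`. It is a right inverse: row `s.succAbove i` of `A * M = 1`, with the `t`-th term
split off the sum, expresses the products of `A_{ŝ,t̂}` with the columns of `M` through the single
column `A (s.succAbove ·) t`, and subtracting the rank-one correction cancels exactly that column.
-/

namespace Matrix

variable {𝕜 : Type*} [Field 𝕜] {m n : ℕ}

def schurComplementAt (M : Matrix (Fin (n + 1)) (Fin (m + 1)) 𝕜) (t : Fin (n + 1))
    (s : Fin (m + 1)) : Matrix (Fin n) (Fin m) 𝕜 :=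
  of fun i j =>
    M (t.succAbove i) (s.succAbove j) - M (t.succAbove i) s * M t (s.succAbove j) / M t s

theorem submatrix_succAbove_mul_schurComplementAt {A : Matrix (Fin (m + 1)) (Fin (n + 1)) 𝕜}
    {M : Matrix (Fin (n + 1)) (Fin (m + 1)) 𝕜} (hAM : A * M = 1) {s : Fin (m + 1)}
    {t : Fin (n + 1)} (h : M t s ≠ 0) :
    A.submatrix s.succAbove t.succAbove * M.schurComplementAt t s = 1 := by
  ext i j
  have row_sum (c : Fin (m + 1)) :
      ∑ x, A (s.succAbove i) (t.succAbove x) * M (t.succAbove x) c =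
        (1 : Matrix (Fin (m + 1)) (Fin (m + 1)) 𝕜) (s.succAbove i) c
          - A (s.succAbove i) t * M t c := by
    rw [← hAM, mul_apply, Fin.sum_univ_succAbove _ t]
    ring
  have one_succAbove : (1 : Matrix (Fin (m + 1)) (Fin (m + 1)) 𝕜) (s.succAbove i) (s.succAbove j)
      = (1 : Matrix (Fin m) (Fin m) 𝕜) i j :=
    congrFun₂ (submatrix_one _ (Fin.succAbove_right_injective (p := s))) i j
  have one_pivot : (1 : Matrix (Fin (m + 1)) (Fin (m + 1)) 𝕜) (s.succAbove i) s = 0 :=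
    one_apply_ne (Fin.succAbove_ne s i)
  calc (A.submatrix s.succAbove t.succAbove * M.schurComplementAt t s) i j
      = ∑ x, A (s.succAbove i) (t.succAbove x) * M (t.succAbove x) (s.succAbove j)
          - M t (s.succAbove j) / M t s *
            ∑ x, A (s.succAbove i) (t.succAbove x) * M (t.succAbove x) s := by
        simp only [mul_apply, submatrix_apply, schurComplementAt, of_apply, Finset.mul_sum,
          ← Finset.sum_sub_distrib]
        exact Finset.sum_congr rfl fun x _ => by ring
    _ = (1 : Matrix (Fin m) (Fin m) 𝕜) i j := by
        rw [row_sum, row_sum, one_succAbove, one_pivot]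
        field_simp
        ring

end Matrix

theorem stmt8_general {𝕜 : Type*} [Field 𝕜] (n : ℕ)
    (A : Matrix (Fin (n + 1)) (Fin (n + 1)) 𝕜) (hA : IsUnit A)
    (s t : Fin (n + 1)) (h : A⁻¹ t s ≠ 0) :
    IsUnit (A.submatrix s.succAbove t.succAbove) ∧
    ∀ i j : Fin n, (A.submatrix s.succAbove t.succAbove)⁻¹ i j =
      A⁻¹ (t.succAbove i) (s.succAbove j) -
        A⁻¹ (t.succAbove i) s * A⁻¹ t (s.succAbove j) / A⁻¹ t s := by
  have hAM : A * A⁻¹ = 1 := A.mul_nonsing_inv ((A.isUnit_iff_isUnit_det).mp hA)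
  have right_inv := Matrix.submatrix_succAbove_mul_schurComplementAt hAM h
  refine ⟨(Matrix.isUnit_iff_isUnit_det _).mpr (Matrix.isUnit_det_of_right_inverse right_inv),
    fun i j => ?_⟩
  rw [Matrix.inv_eq_right_inv right_inv]
  rfl

/-- Let `𝕜` be a field, `n ≥ 1`, `A` an invertible `(n+1)×(n+1)` matrix over
`𝕜` with inverse `M = A⁻¹`, and `s, t` indices with `M t s ≠ 0`. Then the matrix obtained
from `A` by deleting the `s`-th row and `t`-th column is invertible, and for indices `i ≠ t`
and `j ≠ s` the corresponding entry of its inverse equals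
`M i j − M i s · M t j / M t s`. -/
theorem stmt8 {𝕜 : Type*} [Field 𝕜] (n : ℕ) (hn : 1 ≤ n)
    (A : Matrix (Fin (n + 1)) (Fin (n + 1)) 𝕜) (hA : IsUnit A)
    (s t : Fin (n + 1)) (h : A⁻¹ t s ≠ 0) :
    IsUnit (A.submatrix s.succAbove t.succAbove) ∧
    ∀ i j : Fin n, (A.submatrix s.succAbove t.succAbove)⁻¹ i j =
      A⁻¹ (t.succAbove i) (s.succAbove j) -
        A⁻¹ (t.succAbove i) s * A⁻¹ t (s.succAbove j) / A⁻¹ t s :=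
  stmt8_general n A hA s t h
end

section
/- Let K be a field, n, m ≥ 1, let A₁ be an invertible n×n matrix and A₂ an invertible m×m matrix over K. Write a = A₁⁻¹ = (a_{ij}), b = A₂⁻¹ = (b_{ij}), α = Σ_{i,j=1}^{n} a_{ij}, β = Σ_{i,j=1}^{m} b_{ij}, and assume 1 − αβ ≠ 0. Let T be the (n+m)×(n+m) block matrix with upper-left block A₁, lower-right block A₂, and both off-diagonal blocks equal to the all-ones matrix. Then T is invertible and its inverse has the following entries: for 1 ≤ i, j ≤ n the (i,j) entry is a_{ij} + (β/(1−αβ))·(Σ_{k=1}^{n} a_{ik})·(Σ_{k=1}^{n} a_{kj}); for 1 ≤ i ≤ n and 1 ≤ j' ≤ m the (i, n+j') entry is (−1/(1−αβ))·(Σ_{k=1}^{n} a_{ik})·(Σ_{k=1}^{m} b_{k,j'}); for 1 ≤ i' ≤ m and 1 ≤ j ≤ n the (n+i', j) entry is (−1/(1−αβ))·(Σ_{k=1}^{m} b_{i',k})·(Σ_{k=1}^{n} a_{kj}); and for 1 ≤ i', j' ≤ m the (n+i', n+j') entry is b_{i',j'} + (α/(1−αβ))·(Σ_{k=1}^{m}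 b_{i',k})·(Σ_{k=1}^{m} b_{k,j'}). -/
/-- The block matrix `[[A₁, 𝟏], [𝟏, A₂]]` whose off-diagonal blocks are all-ones matrices. -/
def blockT {K : Type*} [Field K] {n m : ℕ}
    (A₁ : Matrix (Fin n) (Fin n) K) (A₂ : Matrix (Fin m) (Fin m) K) :
    Matrix (Fin n ⊕ Fin m) (Fin n ⊕ Fin m) K :=
  Matrix.fromBlocks A₁ (Matrix.of fun _ _ => 1) (Matrix.of fun _ _ => 1) A₂

/-- Woodbury-type formula for the inverse of the block matrix
`T = [[A₁, 𝟏], [𝟏, A₂]]` with `A₁, A₂` invertible, `α` (resp. `β`) the sum of all entries of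
`A₁⁻¹` (resp. `A₂⁻¹`) and `1 − αβ ≠ 0`. -/
theorem stmt9 {K : Type*} [Field K] (n m : ℕ) (hn : 1 ≤ n) (hm : 1 ≤ m)
    (A₁ : Matrix (Fin n) (Fin n) K) (A₂ : Matrix (Fin m) (Fin m) K)
    (h₁ : IsUnit A₁) (h₂ : IsUnit A₂)
    (α β : K)
    (hα : α = ∑ i : Fin n, ∑ j : Fin n, A₁⁻¹ i j)
    (hβ : β = ∑ i : Fin m, ∑ j : Fin m, A₂⁻¹ i j)
    (hαβ : 1 - α * β ≠ 0) :
    IsUnit (blockT A₁ A₂) ∧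
    (∀ i j : Fin n, (blockT A₁ A₂)⁻¹ (Sum.inl i) (Sum.inl j) =
      A₁⁻¹ i j + (β / (1 - α * β)) * (∑ k : Fin n, A₁⁻¹ i k) * (∑ k : Fin n, A₁⁻¹ k j)) ∧
    (∀ (i : Fin n) (j : Fin m), (blockT A₁ A₂)⁻¹ (Sum.inl i) (Sum.inr j) =
      (-1 / (1 - α * β)) * (∑ k : Fin n, A₁⁻¹ i k) * (∑ k : Fin m, A₂⁻¹ k j)) ∧
    (∀ (i : Fin m) (j : Fin n), (blockT A₁ A₂)⁻¹ (Sum.inr i) (Sum.inl j) =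
      (-1 / (1 - α * β)) * (∑ k : Fin m, A₂⁻¹ i k) * (∑ k : Fin n, A₁⁻¹ k j)) ∧
    (∀ i j : Fin m, (blockT A₁ A₂)⁻¹ (Sum.inr i) (Sum.inr j) =
      A₂⁻¹ i j + (α / (1 - α * β)) * (∑ k : Fin m, A₂⁻¹ i k) * (∑ k : Fin m, A₂⁻¹ k j)) := by
  set c := 1 - α * β with hc
  have ha : A₁ * A₁⁻¹ = 1 := Matrix.mul_nonsing_inv _ (A₁.isUnit_iff_isUnit_det.mp h₁)
  have hb : A₂ * A₂⁻¹ = 1 := Matrix.mul_nonsing_inv _ (A₂.isUnit_iff_isUnit_det.mp h₂)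
  have hP1 : ∀ i : Fin n, ∑ k, A₁ i k * (∑ l, A₁⁻¹ k l) = 1 := by
    intro i
    calc ∑ k, A₁ i k * (∑ l, A₁⁻¹ k l) = ∑ l, ∑ k, A₁ i k * A₁⁻¹ k l := by
          rw [Finset.sum_comm]; simp [Finset.mul_sum]
      _ = ∑ l, (A₁ * A₁⁻¹) i l := by simp [Matrix.mul_apply]
      _ = 1 := by rw [ha]; simp [Matrix.one_apply]
  have hP2 : ∀ i : Fin m, ∑ k, A₂ i k * (∑ l, A₂⁻¹ k l) = 1 := by
    intro i
    calc ∑ k, A₂ i k * (∑ l, A₂⁻¹ k l) = ∑ l, ∑ k, A₂ i k * A₂⁻¹ k l := by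
          rw [Finset.sum_comm]; simp [Finset.mul_sum]
      _ = ∑ l, (A₂ * A₂⁻¹) i l := by simp [Matrix.mul_apply]
      _ = 1 := by rw [hb]; simp [Matrix.one_apply]
  let B : Matrix (Fin n ⊕ Fin m) (Fin n ⊕ Fin m) K := Matrix.fromBlocks
    (Matrix.of fun i j => A₁⁻¹ i j + (β / c) * (∑ k, A₁⁻¹ i k) * (∑ k, A₁⁻¹ k j))
    (Matrix.of fun i j => (-1 / c) * (∑ k, A₁⁻¹ i k) * (∑ k, A₂⁻¹ k j))
    (Matrix.of fun i j => (-1 / c) * (∑ k, A₂⁻¹ i k) * (∑ k, A₁⁻¹ k j))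
    (Matrix.of fun i j => A₂⁻¹ i j + (α / c) * (∑ k, A₂⁻¹ i k) * (∑ k, A₂⁻¹ k j))
  have hTB : blockT A₁ A₂ * B = 1 := by
    ext i j
    cases i with
    | inl i => cases j with
      | inl j =>
        simp only [blockT, B, Matrix.mul_apply, Fintype.sum_sum_type,
          Matrix.fromBlocks_apply₁₁, Matrix.fromBlocks_apply₁₂, Matrix.fromBlocks_apply₂₁,
          Matrix.fromBlocks_apply₂₂, Matrix.of_apply, Matrix.one_apply, Sum.inl.injEq]
        have r1 : ∀ k : Fin n,
            A₁ i k * (A₁⁻¹ k j + β / c * (∑ l, A₁⁻¹ k l) * (∑ l, A₁⁻¹ l j))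
            = A₁ i k * A₁⁻¹ k j
              + (β / c * (∑ l, A₁⁻¹ l j)) * (A₁ i k * (∑ l, A₁⁻¹ k l)) := fun k => by ring
        have r2 : ∀ k : Fin m,
            (1 : K) * (-1 / c * (∑ l, A₂⁻¹ k l) * (∑ l, A₁⁻¹ l j))
            = (-1 / c * (∑ l, A₁⁻¹ l j)) * (∑ l, A₂⁻¹ k l) := fun k => by ring
        rw [Finset.sum_congr rfl fun k _ => r1 k, Finset.sum_congr rfl fun k _ => r2 k,
          Finset.sum_add_distrib, ← Finset.mul_sum, ← Finset.mul_sum, hP1 i, ← hβ]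
        have : ∑ k, A₁ i k * A₁⁻¹ k j = (A₁ * A₁⁻¹) i j := (Matrix.mul_apply).symm
        rw [this, ha]
        by_cases h : i = j <;> simp [h, Matrix.one_apply] <;> ring
      | inr j =>
        simp only [blockT, B, Matrix.mul_apply, Fintype.sum_sum_type,
          Matrix.fromBlocks_apply₁₁, Matrix.fromBlocks_apply₁₂, Matrix.fromBlocks_apply₂₁,
          Matrix.fromBlocks_apply₂₂, Matrix.of_apply, Matrix.one_apply, reduceCtorEq, if_false]
        have r1 : ∀ k : Fin n,
            A₁ i k * (-1 / c * (∑ l, A₁⁻¹ k l) * (∑ l, A₂⁻¹ l j))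
            = (-1 / c * (∑ l, A₂⁻¹ l j)) * (A₁ i k * (∑ l, A₁⁻¹ k l)) := fun k => by ring
        have r2 : ∀ k : Fin m,
            (1 : K) * (A₂⁻¹ k j + α / c * (∑ l, A₂⁻¹ k l) * (∑ l, A₂⁻¹ l j))
            = A₂⁻¹ k j + (α / c * (∑ l, A₂⁻¹ l j)) * (∑ l, A₂⁻¹ k l) := fun k => by ring
        rw [Finset.sum_congr rfl fun k _ => r1 k, Finset.sum_congr rfl fun k _ => r2 k,
          Finset.sum_add_distrib, ← Finset.mul_sum, ← Finset.mul_sum, hP1 i, ← hβ]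
        field_simp
        ring
    | inr i => cases j with
      | inl j =>
        simp only [blockT, B, Matrix.mul_apply, Fintype.sum_sum_type,
          Matrix.fromBlocks_apply₁₁, Matrix.fromBlocks_apply₁₂, Matrix.fromBlocks_apply₂₁,
          Matrix.fromBlocks_apply₂₂, Matrix.of_apply, Matrix.one_apply, reduceCtorEq, if_false]
        have r1 : ∀ k : Fin n,
            (1 : K) * (A₁⁻¹ k j + β / c * (∑ l, A₁⁻¹ k l) * (∑ l, A₁⁻¹ l j))
            = A₁⁻¹ k j + (β / c * (∑ l, A₁⁻¹ l j)) * (∑ l, A₁⁻¹ k l) := fun k => by ring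
        have r2 : ∀ k : Fin m,
            A₂ i k * (-1 / c * (∑ l, A₂⁻¹ k l) * (∑ l, A₁⁻¹ l j))
            = (-1 / c * (∑ l, A₁⁻¹ l j)) * (A₂ i k * (∑ l, A₂⁻¹ k l)) := fun k => by ring
        rw [Finset.sum_congr rfl fun k _ => r1 k, Finset.sum_congr rfl fun k _ => r2 k,
          Finset.sum_add_distrib, ← Finset.mul_sum, ← Finset.mul_sum, hP2 i, ← hα]
        field_simp
        ring
      | inr j =>
        simp only [blockT, B, Matrix.mul_apply, Fintype.sum_sum_type,
          Matrix.fromBlocks_apply₁₁, Matrix.fromBlocks_apply₁₂, Matrix.fromBlocks_apply₂₁,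
          Matrix.fromBlocks_apply₂₂, Matrix.of_apply, Matrix.one_apply, Sum.inr.injEq]
        have r1 : ∀ k : Fin n,
            (1 : K) * (-1 / c * (∑ l, A₁⁻¹ k l) * (∑ l, A₂⁻¹ l j))
            = (-1 / c * (∑ l, A₂⁻¹ l j)) * (∑ l, A₁⁻¹ k l) := fun k => by ring
        have r2 : ∀ k : Fin m,
            A₂ i k * (A₂⁻¹ k j + α / c * (∑ l, A₂⁻¹ k l) * (∑ l, A₂⁻¹ l j))
            = A₂ i k * A₂⁻¹ k j
              + (α / c * (∑ l, A₂⁻¹ l j)) * (A₂ i k * (∑ l, A₂⁻¹ k l)) := fun k => by ring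
        rw [Finset.sum_congr rfl fun k _ => r1 k, Finset.sum_congr rfl fun k _ => r2 k,
          Finset.sum_add_distrib, ← Finset.mul_sum, ← Finset.mul_sum, hP2 i, ← hα]
        have : ∑ k, A₂ i k * A₂⁻¹ k j = (A₂ * A₂⁻¹) i j := (Matrix.mul_apply).symm
        rw [this, hb]
        by_cases h : i = j <;> simp [h, Matrix.one_apply] <;> ring
  have hinv : (blockT A₁ A₂)⁻¹ = B := Matrix.inv_eq_right_inv hTB
  refine ⟨?_, ?_, ?_, ?_, ?_⟩
  · have := invertibleOfRightInverse _ _ hTB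
    exact isUnit_of_invertible _
  · intro i j; rw [hinv]; simp [B]
  · intro i j; rw [hinv]; simp [B]
  · intro i j; rw [hinv]; simp [B]
  · intro i j; rw [hinv]; simp [B]
end

section
/- Let p be a prime and r ≥ 1 an integer, let ζ = e^{2πi/p^r} ∈ ℂ, and regard M(p^r) as a matrix over ℂ. Then: (i) the all-ones vector is an eigenvector of M(p^r) with eigenvalue −p^{r−1}; (ii) for each j ∈ {1, …, p^r−1}, the vector v_j with entries (v_j)_k = ζ^{jk} (for k ∈ {0, …, p^r−1}) is an eigenvector of M(p^r) with eigenvalue −(p+1)·p^{2r−2−ν_p(j)}. In particular, M(p^r) is invertible. -/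
/-!
`M(p^r)` is the circulant matrix of the function `w` on `ℤ/p^r` with `w 0 = -p^{2r-1}` and
`w d = p^{2ν_p(d)}` otherwise (the valuation of `i - j` only depends on it modulo `p^r`), so every
character `k ↦ ζ^{jk}` is an eigenvector, with eigenvalue `∑_d w(d) ζ^{jd}`. Expanding
`p^{2ν(d)} = 1 + ∑_{s<ν(d)} (p^{2s+2} - p^{2s})` writes `w` as a combination of indicators of the
subgroups `p^{s+1}ℤ/p^rℤ`, whose character sums are `p^{r-s-1}` or `0` according as
`p^{r-s-1} ∣ j`, and the resulting sum telescopes. The eigenvalues are nonzero and the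
eigenvectors form an invertible Vandermonde matrix, so `M(p^r)` is invertible.
-/

/-- `M(p^r)`: the `p^r × p^r` matrix over `ℂ` whose `(i,j)` entry is `−p^{2r−1}` if `i = j`
and `p^{2ν_p(i−j)}` otherwise, where `ν_p` is the `p`-adic valuation. -/
def Mpr (p r : ℕ) : Matrix (Fin (p ^ r)) (Fin (p ^ r)) ℂ := fun i j =>
  if i = j then -(p : ℂ) ^ (2 * r - 1)
  else (p : ℂ) ^ (2 * padicValInt p ((i : ℤ) - (j : ℤ)))

open Finset Matrix

theorem Matrix.circulant_mulVec_addChar {G R : Type*} [AddCommGroup G] [Fintype G]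
    [CommSemiring R] (v : G → R) (ψ : AddChar G R) :
    circulant v *ᵥ ⇑ψ = (∑ d, v d * ψ (-d)) • ⇑ψ := by
  ext i
  simp only [mulVec, dotProduct, circulant_apply, Pi.smul_apply, smul_eq_mul, sum_mul]
  refine Fintype.sum_equiv (Equiv.subLeft i) _ _ fun k => ?_
  rw [Equiv.subLeft_apply, mul_assoc, ← AddChar.map_add_eq_mul, neg_sub, sub_add_cancel]

def Fin.powAddChar {M : Type*} [Monoid M] {n : ℕ} [NeZero n] (x : M) (hx : x ^ n = 1) :
    AddChar (Fin n) M where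
  toFun k := x ^ (k : ℕ)
  map_zero_eq_one' := by simp
  map_add_eq_mul' a b := by rw [Fin.val_add, ← pow_eq_pow_mod _ hx, pow_add]

theorem Fin.powAddChar_apply {M : Type*} [Monoid M] {n : ℕ} [NeZero n] (x : M) (hx : x ^ n = 1)
    (k : Fin n) : Fin.powAddChar x hx k = x ^ (k : ℕ) := rfl

theorem Matrix.isUnit_of_mulVec_transpose_eq_smul {n R : Type*} [Fintype n] [DecidableEq n]
    [CommRing R] {A V : Matrix n n R} (hV : IsUnit V) (μ : n → R) (hμ : ∀ j, IsUnit (μ j))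
    (hAV : ∀ j, A *ᵥ Vᵀ j = μ j • Vᵀ j) : IsUnit A := by
  have hdiag : A * V = V * diagonal μ := by
    ext i j
    rw [mul_diagonal, mul_apply, ← mul_comm (μ j)]
    exact congrFun (hAV j) i
  have hdet := congrArg det hdiag
  rw [det_mul, det_mul, det_diagonal] at hdet
  rw [isUnit_iff_isUnit_det] at hV ⊢
  exact isUnit_of_mul_isUnit_left (hdet ▸ hV.mul (IsUnit.prod_univ_iff.2 hμ) :)

section rootsOfUnity
variable {R : Type*} [CommRing R] [IsDomain R]

theorem IsPrimitiveRoot.sum_range_pow_mul {η : R} {n : ℕ} (hη : IsPrimitiveRoot η n) (j : ℕ) :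
    ∑ m ∈ range n, η ^ (j * m) = if n ∣ j then (n : R) else 0 := by
  simp_rw [pow_mul]
  split_ifs with h
  · simp [(hη.pow_eq_one_iff_dvd j).2 h]
  · have hη1 : η ^ j - 1 ≠ 0 := sub_ne_zero.2 (mt (hη.pow_eq_one_iff_dvd j).1 h)
    refine (mul_eq_zero.1 ?_).resolve_right hη1
    rw [geom_sum_mul, ← pow_mul, mul_comm, pow_mul, hη.pow_eq_one, one_pow, sub_self]

theorem IsPrimitiveRoot.sum_filter_dvd_pow_mul {ζ : R} {a b : ℕ} (hζ : IsPrimitiveRoot ζ (a * b))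
    (ha : 0 < a) (hb : 0 < b) (j : ℕ) :
    ∑ d ∈ range (a * b) with a ∣ d, ζ ^ (j * d) = if b ∣ j then (b : R) else 0 := by
  have hmul : {d ∈ range (a * b) | a ∣ d} = (range b).image (a * ·) := by
    ext d
    simp only [mem_filter, mem_range, mem_image]
    constructor
    · rintro ⟨hd, m, rfl⟩
      exact ⟨m, Nat.lt_of_mul_lt_mul_left hd, rfl⟩
    · rintro ⟨m, hm, rfl⟩
      exact ⟨Nat.mul_lt_mul_of_pos_left hm ha, dvd_mul_right a m⟩
  rw [hmul, sum_image fun _ _ _ _ h => Nat.eq_of_mul_eq_mul_left ha h,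
    ← (hζ.pow (Nat.mul_pos ha hb) rfl).sum_range_pow_mul j]
  refine sum_congr rfl fun m _ => ?_
  rw [← pow_mul, mul_left_comm]

end rootsOfUnity

theorem Finset.sum_range_ite_le_sub {G : Type*} [AddCommGroup G] (f : ℕ → G) {m n : ℕ}
    (hmn : m ≤ n) : ∑ s ∈ range n, (if m ≤ s then f (s + 1) - f s else 0) = f n - f m := by
  have hfilter : {s ∈ range n | m ≤ s} = Ico m n := by
    ext s
    simp only [mem_filter, mem_range, mem_Ico]
    omega
  rw [← sum_filter, hfilter, sum_Ico_eq_sub _ hmn, sum_range_sub, sum_range_sub,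
    sub_sub_sub_cancel_right]

section padicVal

variable {p r : ℕ} [hp : Fact p.Prime]

theorem padicValInt_le_of_dvd_sub {a b : ℤ} (hab : (p : ℤ) ^ r ∣ a - b)
    (ha : ¬ (p : ℤ) ^ r ∣ a) : padicValInt p a ≤ padicValInt p b := by
  have hlt : padicValInt p a < r := by
    by_contra! h
    exact ha ((padicValInt_dvd_iff r a).2 (Or.inr h))
  have hb : (p : ℤ) ^ padicValInt p a ∣ b := by
    simpa using dvd_sub (padicValInt_dvd a) ((pow_dvd_pow _ hlt.le).trans hab)
  rcases (padicValInt_dvd_iff _ b).1 hb with rfl | h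
  · exact absurd (by simpa using hab) ha
  · exact h

theorem padicValInt_eq_of_dvd_sub {a b : ℤ} (hab : (p : ℤ) ^ r ∣ a - b)
    (ha : ¬ (p : ℤ) ^ r ∣ a) : padicValInt p a = padicValInt p b :=
  (padicValInt_le_of_dvd_sub hab ha).antisymm <| padicValInt_le_of_dvd_sub (dvd_sub_comm.1 hab)
    fun hb => ha (by simpa using dvd_add hab hb)

theorem padicValNat_val_eq_padicValInt {x : Fin (p ^ r)} (hx : x ≠ 0) {a : ℤ}
    (ha : (x : ℤ) = a % (p ^ r : ℕ)) : padicValNat p x = padicValInt p a := by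
  rw [← padicValInt.of_nat]
  refine padicValInt_eq_of_dvd_sub (r := r) ⟨-(a / (p ^ r : ℕ)), ?_⟩ fun h => hx ?_
  · rw [ha, Int.emod_def]; push_cast; ring
  · have : p ^ r ∣ (x : ℕ) := by exact_mod_cast h
    exact Fin.ext (Nat.eq_zero_of_dvd_of_lt this x.isLt)

theorem padicValNat_lt_of_lt_pow {d : ℕ} (hd : d ≠ 0) (hdr : d < p ^ r) : padicValNat p d < r :=
  (Nat.pow_lt_pow_iff_right hp.out.one_lt).1 <|
    (Nat.le_of_dvd (Nat.pos_of_ne_zero hd) pow_padicValNat_dvd).trans_lt hdr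

theorem pow_padicValNat_eq_one_add_sum {R : Type*} [CommRing R] {d : ℕ} (hd : d ≠ 0)
    (hdr : padicValNat p d ≤ r) (x : R) :
    x ^ padicValNat p d = 1 + ∑ s ∈ range r with p ^ (s + 1) ∣ d, (x ^ (s + 1) - x ^ s) := by
  have hfilter : {s ∈ range r | p ^ (s + 1) ∣ d} = range (padicValNat p d) := by
    ext s
    simp only [mem_filter, mem_range, padicValNat_dvd_iff_le hd]
    omega
  rw [hfilter, sum_range_sub]
  ring

end padicVal

noncomputable def mprWeight (p r d : ℕ) : ℂ :=
  if d = 0 then -(p : ℂ) ^ (2 * r - 1) else (p : ℂ) ^ (2 * padicValNat p d)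

noncomputable def mprEigenvalue (p r j : ℕ) : ℂ :=
  if j = 0 then -(p : ℂ) ^ (r - 1) else -((p : ℂ) + 1) * (p : ℂ) ^ (2 * r - 2 - padicValNat p j)

section mpr

variable {p : ℕ} [hp : Fact p.Prime] {r : ℕ}

theorem mpr_eq_circulant : Mpr p r = circulant fun d : Fin (p ^ r) => mprWeight p r d := by
  ext i j
  rw [circulant_apply, Mpr, mprWeight]
  by_cases hij : i = j
  · simp [hij]
  · have hij' : i - j ≠ 0 := sub_ne_zero.2 hij
    rw [if_neg hij, if_neg (Fin.val_ne_zero_iff.2 hij'),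
      padicValNat_val_eq_padicValInt hij' (Fin.coe_int_sub_eq_mod i j)]

theorem mprWeight_neg (d : Fin (p ^ r)) :
    mprWeight p r (-d : Fin (p ^ r)) = mprWeight p r d := by
  rcases eq_or_ne d 0 with rfl | hd
  · simp
  have hnd : -d ≠ 0 := neg_ne_zero.2 hd
  have hval : (((-d : Fin (p ^ r)) : ℕ) : ℤ) = (-(d : ℤ)) % (p ^ r : ℕ) := by
    simpa using Fin.coe_int_sub_eq_mod 0 d
  rw [mprWeight, mprWeight, if_neg (Fin.val_ne_zero_iff.2 hnd), if_neg (Fin.val_ne_zero_iff.2 hd),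
    padicValNat_val_eq_padicValInt hnd hval, padicValInt, Int.natAbs_neg, Int.natAbs_natCast]

theorem mprWeight_eq_sum {d : ℕ} (hd : d < p ^ r) :
    mprWeight p r d = 1 + ∑ s ∈ range r,
      (if p ^ (s + 1) ∣ d then ((p : ℂ) ^ 2) ^ (s + 1) - ((p : ℂ) ^ 2) ^ s else 0)
        - if d = 0 then (p : ℂ) ^ (2 * r) + (p : ℂ) ^ (2 * r - 1) else 0 := by
  rw [mprWeight]
  split_ifs with hd0
  · simp only [hd0, dvd_zero, if_true]
    rw [sum_range_sub, ← pow_mul]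
    ring
  · rw [← sum_filter, pow_mul,
      pow_padicValNat_eq_one_add_sum hd0 (padicValNat_lt_of_lt_pow hd0 hd).le, sub_zero]

theorem sum_mprWeight_mul_pow_eq {ζ : ℂ} (hζ : IsPrimitiveRoot ζ (p ^ r)) (j : ℕ) :
    ∑ d ∈ range (p ^ r), mprWeight p r d * ζ ^ (j * d) =
      (if p ^ r ∣ j then (p : ℂ) ^ r else 0) + ∑ s ∈ range r,
        (((p : ℂ) ^ 2) ^ (s + 1) - ((p : ℂ) ^ 2) ^ s) *
          (if p ^ (r - (s + 1)) ∣ j then (p : ℂ) ^ (r - (s + 1)) else 0)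
        - ((p : ℂ) ^ (2 * r) + (p : ℂ) ^ (2 * r - 1)) := by
  have hp0 : 0 < p := hp.out.pos
  have hlevel : ∀ s ∈ range r, ∑ d ∈ range (p ^ r), (if p ^ (s + 1) ∣ d then ζ ^ (j * d) else 0) =
      if p ^ (r - (s + 1)) ∣ j then (p : ℂ) ^ (r - (s + 1)) else 0 := fun s hs => by
    have hsplit : p ^ r = p ^ (s + 1) * p ^ (r - (s + 1)) := by
      rw [← pow_add, Nat.add_sub_cancel' (mem_range.1 hs)]
    rw [← sum_filter, hsplit, (hsplit ▸ hζ : IsPrimitiveRoot ζ _).sum_filter_dvd_pow_mul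
      (pow_pos hp0 _) (pow_pos hp0 _)]
    simp
  rw [sum_congr rfl fun (d : ℕ) (hd : d ∈ range (p ^ r)) =>
    congrArg (fun w : ℂ => w * ζ ^ (j * d)) (mprWeight_eq_sum (mem_range.1 hd))]
  simp only [sub_mul (1 + _ : ℂ), add_mul (1 : ℂ), one_mul, sum_mul (range r), ite_mul, zero_mul,
    sum_add_distrib, sum_sub_distrib]
  rw [sum_comm, hζ.sum_range_pow_mul, sum_ite_eq' (range (p ^ r)) 0,
    if_pos (mem_range.2 (pow_pos hp0 r)), mul_zero, pow_zero, mul_one, Nat.cast_pow]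
  congr 2
  refine sum_congr rfl fun s hs => ?_
  rw [← hlevel s hs, mul_sum]
  simp only [mul_ite, mul_zero]

theorem sum_mprWeight_mul_pow {ζ : ℂ} (hζ : IsPrimitiveRoot ζ (p ^ r)) (hr : 1 ≤ r) {j : ℕ}
    (hj : j < p ^ r) :
    ∑ d ∈ range (p ^ r), mprWeight p r d * ζ ^ (j * d) = mprEigenvalue p r j := by
  set m := if j = 0 then 0 else r - 1 - padicValNat p j with hm
  set g : ℕ → ℂ := fun s => ((p : ℂ) + 1) * (p : ℂ) ^ (r + s - 1) with hg
  have hterm : ∀ s ∈ range r, (((p : ℂ) ^ 2) ^ (s + 1) - ((p : ℂ) ^ 2) ^ s) *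
      (if p ^ (r - (s + 1)) ∣ j then (p : ℂ) ^ (r - (s + 1)) else 0) =
      if m ≤ s then g (s + 1) - g s else 0 := fun s hs => by
    obtain ⟨k, rfl⟩ := Nat.exists_eq_add_of_lt (mem_range.1 hs)
    have hdvd : p ^ (s + k + 1 - (s + 1)) ∣ j ↔ m ≤ s := by
      rcases eq_or_ne j 0 with rfl | hj0
      · simp [hm]
      · have := padicValNat_lt_of_lt_pow hj0 hj
        rw [padicValNat_dvd_iff_le hj0, hm, if_neg hj0]
        omega
    by_cases hms : m ≤ s
    · simp only [if_pos (hdvd.2 hms), if_pos hms, hg]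
      rw [show s + k + 1 - (s + 1) = k by omega,
        show s + k + 1 + (s + 1) - 1 = 2 * s + k + 1 by omega,
        show s + k + 1 + s - 1 = 2 * s + k by omega]
      ring
    · rw [if_neg (mt hdvd.1 hms), if_neg hms, mul_zero]
  rw [sum_mprWeight_mul_pow_eq hζ, sum_congr rfl hterm,
    sum_range_ite_le_sub g (by rw [hm]; split_ifs <;> omega), mprEigenvalue]
  rcases eq_or_ne j 0 with rfl | hj0
  · obtain ⟨k, rfl⟩ := Nat.exists_eq_add_of_le' hr
    simp only [hm, hg, dvd_zero, if_true]
    rw [show k + 1 + (k + 1) - 1 = 2 * k + 1 by omega, show k + 1 + 0 - 1 = k by omega,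
      show 2 * (k + 1) - 1 = 2 * k + 1 by omega]
    ring
  · set t := padicValNat p j
    obtain ⟨l, rfl⟩ := Nat.exists_eq_add_of_lt (padicValNat_lt_of_lt_pow hj0 hj)
    simp only [hm, hg, if_neg hj0, if_neg fun h => hj0 (Nat.eq_zero_of_dvd_of_lt h hj)]
    rw [show t + l + 1 + (t + l + 1) - 1 = 2 * t + 2 * l + 1 by omega,
      show t + l + 1 + (t + l + 1 - 1 - t) - 1 = t + 2 * l by omega,
      show 2 * (t + l + 1) - 1 = 2 * t + 2 * l + 1 by omega,
      show 2 * (t + l + 1) - 2 - t = t + 2 * l by omega]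
    ring

theorem mprEigenvalue_ne_zero (j : ℕ) : mprEigenvalue p r j ≠ 0 := by
  have hp0 : (p : ℂ) ≠ 0 := Nat.cast_ne_zero.2 hp.out.ne_zero
  rw [mprEigenvalue]
  split_ifs
  · exact neg_ne_zero.2 (pow_ne_zero _ hp0)
  · exact mul_ne_zero (neg_ne_zero.2 (Nat.cast_add_one_ne_zero p)) (pow_ne_zero _ hp0)

theorem mpr_mulVec_pow {ζ : ℂ} (hζ : IsPrimitiveRoot ζ (p ^ r)) (hr : 1 ≤ r) (j : Fin (p ^ r)) :
    Mpr p r *ᵥ (fun k : Fin (p ^ r) => ζ ^ ((j : ℕ) * k)) =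
      mprEigenvalue p r j • fun k : Fin (p ^ r) => ζ ^ ((j : ℕ) * k) := by
  have hψ : (fun k : Fin (p ^ r) => ζ ^ ((j : ℕ) * k)) =
      Fin.powAddChar (ζ ^ (j : ℕ)) (by rw [← pow_mul, mul_comm, pow_mul, hζ.pow_eq_one, one_pow]) :=
    funext fun k => pow_mul ζ j k
  rw [hψ, mpr_eq_circulant, circulant_mulVec_addChar, ← sum_mprWeight_mul_pow hζ hr j.isLt,
    ← Fin.sum_univ_eq_sum_range]
  congr 1
  refine Fintype.sum_equiv (Equiv.neg _) _ _ fun d => ?_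
  rw [Equiv.neg_apply, Fin.powAddChar_apply, mprWeight_neg, pow_mul]

theorem isUnit_mpr (hr : 1 ≤ r) : IsUnit (Mpr p r) := by
  have hζ := Complex.isPrimitiveRoot_exp (p ^ r) (NeZero.ne _)
  set ζ := Complex.exp (2 * Real.pi * Complex.I / (p ^ r : ℕ))
  refine isUnit_of_mulVec_transpose_eq_smul (V := vandermonde fun k : Fin (p ^ r) => ζ ^ (k : ℕ))
    ?_ _ (fun j => (mprEigenvalue_ne_zero (p := p) (r := r) j).isUnit) fun j => ?_
  · rw [isUnit_iff_isUnit_det, isUnit_iff_ne_zero, det_vandermonde_ne_zero_iff]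
    exact fun a b h => Fin.ext (hζ.pow_inj a.isLt b.isLt h)
  · convert mpr_mulVec_pow hζ hr j using 2 <;>
    · ext k
      rw [transpose_apply, vandermonde_apply, ← pow_mul, mul_comm]

end mpr

/-- Let `p` be a prime, `r ≥ 1`, `ζ = e^{2πi/p^r}`. Then (i) the all-ones
vector is an eigenvector of `M(p^r)` with eigenvalue `−p^{r−1}`; (ii) for each nonzero
`j ∈ {1, …, p^r−1}`, the vector `v_j` with `(v_j)_k = ζ^{jk}` is an eigenvector of `M(p^r)`
with eigenvalue `−(p+1)·p^{2r−2−ν_p(j)}`. In particular, `M(p^r)` is invertible. -/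
theorem stmt10 (p r : ℕ) (hp : p.Prime) (hr : 1 ≤ r)
    (ζ : ℂ) (hζ : ζ = Complex.exp (2 * Real.pi * Complex.I / (p ^ r : ℕ))) :
    ((Mpr p r).mulVec (fun _ => 1) = (-(p : ℂ) ^ (r - 1)) • (fun _ => (1 : ℂ))) ∧
    (∀ j : Fin (p ^ r), (j : ℕ) ≠ 0 →
      (Mpr p r).mulVec (fun k : Fin (p ^ r) => ζ ^ ((j : ℕ) * (k : ℕ))) =
        (-((p : ℂ) + 1) * (p : ℂ) ^ (2 * (r : ℤ) - 2 - (padicValNat p (j : ℕ) : ℤ))) •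
          (fun k : Fin (p ^ r) => ζ ^ ((j : ℕ) * (k : ℕ)))) ∧
    IsUnit (Mpr p r) := by
  have : Fact p.Prime := ⟨hp⟩
  have hζ' : IsPrimitiveRoot ζ (p ^ r) := hζ ▸ Complex.isPrimitiveRoot_exp _ (NeZero.ne _)
  refine ⟨?_, fun j hj => ?_, isUnit_mpr hr⟩
  · simpa [mprEigenvalue] using mpr_mulVec_pow hζ' hr 0
  · have ht := padicValNat_lt_of_lt_pow hj j.isLt
    rw [mpr_mulVec_pow hζ' hr j, mprEigenvalue, if_neg hj,
      show 2 * (r : ℤ) - 2 - padicValNat p j = (2 * r - 2 - padicValNat p j : ℕ) by omega,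
      zpow_natCast]
end

section
/- For every real number x, one has ⟨3x⟩·(1 − ⟨3x⟩) + ⟨4x⟩·(1 − ⟨4x⟩) − ⟨5x⟩·(1 − ⟨5x⟩) ≥ 0. -/
set_option maxHeartbeats 1000000

private lemma fr_eq (y : ℝ) (n : ℤ) (h1 : (n : ℝ) ≤ y) (h2 : y < n + 1) :
    Int.fract y = y - n := by
  rw [Int.fract, Int.floor_eq_iff.mpr ⟨h1, h2⟩]

private lemma key (t : ℝ) (ht0 : 0 ≤ t) (ht1 : t < 1) :
    Int.fract (3 * t) * (1 - Int.fract (3 * t)) +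
      Int.fract (4 * t) * (1 - Int.fract (4 * t)) -
      Int.fract (5 * t) * (1 - Int.fract (5 * t)) ≥ 0 := by
  rcases lt_or_ge t (1/5) with h | h
  · rw [fr_eq (3*t) 0 (by push_cast; linarith) (by push_cast; linarith),
       fr_eq (4*t) 0 (by push_cast; linarith) (by push_cast; linarith),
       fr_eq (5*t) 0 (by push_cast; linarith) (by push_cast; linarith)]
    push_cast; nlinarith [sq_nonneg t]
  rcases lt_or_ge t (1/4) with h2 | h2
  · rw [fr_eq (3*t) 0 (by push_cast; linarith) (by push_cast; linarith),
       fr_eq (4*t) 0 (by push_cast; linarith) (by push_cast; linarith),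
       fr_eq (5*t) 1 (by push_cast; linarith) (by push_cast; linarith)]
    push_cast; nlinarith [sq_nonneg t]
  rcases lt_or_ge t (1/3) with h3 | h3
  · rw [fr_eq (3*t) 0 (by push_cast; linarith) (by push_cast; linarith),
       fr_eq (4*t) 1 (by push_cast; linarith) (by push_cast; linarith),
       fr_eq (5*t) 1 (by push_cast; linarith) (by push_cast; linarith)]
    push_cast; nlinarith [sq_nonneg t]
  rcases lt_or_ge t (2/5) with h4 | h4
  · rw [fr_eq (3*t) 1 (by push_cast; linarith) (by push_cast; linarith),
       fr_eq (4*t) 1 (by push_cast; linarith) (by push_cast; linarith),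
       fr_eq (5*t) 1 (by push_cast; linarith) (by push_cast; linarith)]
    push_cast; nlinarith [sq_nonneg t]
  rcases lt_or_ge t (1/2) with h5 | h5
  · rw [fr_eq (3*t) 1 (by push_cast; linarith) (by push_cast; linarith),
       fr_eq (4*t) 1 (by push_cast; linarith) (by push_cast; linarith),
       fr_eq (5*t) 2 (by push_cast; linarith) (by push_cast; linarith)]
    push_cast; nlinarith [sq_nonneg t]
  rcases lt_or_ge t (3/5) with h6 | h6
  · rw [fr_eq (3*t) 1 (by push_cast; linarith) (by push_cast; linarith),
       fr_eq (4*t) 2 (by push_cast; linarith) (by push_cast; linarith),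
       fr_eq (5*t) 2 (by push_cast; linarith) (by push_cast; linarith)]
    push_cast; nlinarith [sq_nonneg t]
  rcases lt_or_ge t (2/3) with h7 | h7
  · rw [fr_eq (3*t) 1 (by push_cast; linarith) (by push_cast; linarith),
       fr_eq (4*t) 2 (by push_cast; linarith) (by push_cast; linarith),
       fr_eq (5*t) 3 (by push_cast; linarith) (by push_cast; linarith)]
    push_cast; nlinarith [sq_nonneg t]
  rcases lt_or_ge t (3/4) with h8 | h8
  · rw [fr_eq (3*t) 2 (by push_cast; linarith) (by push_cast; linarith),
       fr_eq (4*t) 2 (by push_cast; linarith) (by push_cast; linarith),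
       fr_eq (5*t) 3 (by push_cast; linarith) (by push_cast; linarith)]
    push_cast; nlinarith [sq_nonneg t]
  rcases lt_or_ge t (4/5) with h9 | h9
  · rw [fr_eq (3*t) 2 (by push_cast; linarith) (by push_cast; linarith),
       fr_eq (4*t) 3 (by push_cast; linarith) (by push_cast; linarith),
       fr_eq (5*t) 3 (by push_cast; linarith) (by push_cast; linarith)]
    push_cast; nlinarith [sq_nonneg t]
  · rw [fr_eq (3*t) 2 (by push_cast; linarith) (by push_cast; linarith),
       fr_eq (4*t) 3 (by push_cast; linarith) (by push_cast; linarith),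
       fr_eq (5*t) 4 (by push_cast; linarith) (by push_cast; linarith)]
    push_cast; nlinarith [sq_nonneg t]

/-- For every real `x`,
`⟨3x⟩·(1 − ⟨3x⟩) + ⟨4x⟩·(1 − ⟨4x⟩) − ⟨5x⟩·(1 − ⟨5x⟩) ≥ 0`, where `⟨·⟩` denotes the
fractional part. -/
theorem stmt18 (x : ℝ) :
    Int.fract (3 * x) * (1 - Int.fract (3 * x)) +
      Int.fract (4 * x) * (1 - Int.fract (4 * x)) -
      Int.fract (5 * x) * (1 - Int.fract (5 * x)) ≥ 0 := by
  have e : ∀ n : ℤ, Int.fract ((n : ℝ) * x) = Int.fract ((n : ℝ) * Int.fract x) := by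
    intro n
    have : (n : ℝ) * x = (n : ℝ) * Int.fract x + (n * ⌊x⌋ : ℤ) := by
      rw [Int.fract]; push_cast; ring
    rw [this, Int.fract_add_intCast]
  have h3 := e 3; have h4 := e 4; have h5 := e 5
  push_cast at h3 h4 h5
  rw [h3, h4, h5]
  exact key _ (Int.fract_nonneg x) (Int.fract_lt_one x)
end
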